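/- The local algebra K[t,s]/(t^5, t^4 − t^2s, s^2) is not isomorphic to K[z,w]/(z^5, zw, w^3): any K-algebra homomorphism sending t ↦ az + bw + (higher order) and s ↦ cz + dw + (higher order) with s² = 0 forces c = d = 0, contradicting surjectivity. -/

import Mathlib

/-!
If `y² = 0` in `B = K[z,w]/(z⁵, zw, w³)`, compare the coefficients of `1`, `z²`, `w²` in a lift
of `y²`: none of these monomials is divisible by a generator of the monomial ideal, so the
constant and linear parts of `y` vanish and `y ∈ 𝔪²`. This applies to `y = φ(s)`. Passing to
`B/𝔪² = K[z,w]/(z,w)²`, a surjective `φ` would make this three-dimensional algebra generated by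
the single element `φ(t)`; but every `x` there satisfies `(x - c)² = 0` for a scalar `c`, so
`K[x]` is spanned by `1` and `x`.
-/

open MvPolynomial

open Finsupp in
theorem Finsupp.eq_zero_or_eq_single_one_of_degree_lt_two {σ : Type*} {x : σ →₀ ℕ}
    (hx : x.degree < 2) : x = 0 ∨ ∃ i, x = single i 1 := by
  rcases eq_or_ne x 0 with rfl | hne
  · exact .inl rfl
  obtain ⟨i, hi⟩ := Finsupp.support_nonempty_iff.mpr hne
  obtain ⟨y, rfl⟩ := le_iff_exists_add'.mp (show single i 1 ≤ x by simp_all; omega)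
  have : y.degree = 0 := by simp only [map_add, degree_single] at hx; omega
  exact .inr ⟨i, by simp_all [degree_eq_zero_iff]⟩

theorem Algebra.adjoin_singleton_le_span_of_sq_mem {R A : Type*} [CommRing R] [Ring A]
    [Algebra R A] {x : A} (hx : x ^ 2 ∈ Submodule.span R {1, x}) :
    Subalgebra.toSubmodule (Algebra.adjoin R {x}) ≤ Submodule.span R {1, x} := by
  have h1 : (1 : A) ∈ Submodule.span R {1, x} := Submodule.subset_span (by simp)
  have hx1 : x ∈ Submodule.span R {1, x} := Submodule.subset_span (by simp)
  have hmul : ∀ a b, a ∈ Submodule.span R {1, x} → b ∈ Submodule.span R {1, x} →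
      a * b ∈ Submodule.span R {1, x} := by
    intro a b ha hb
    obtain ⟨α, β, rfl⟩ := Submodule.mem_span_pair.mp ha
    obtain ⟨γ, δ, rfl⟩ := Submodule.mem_span_pair.mp hb
    simp only [add_mul, mul_add, smul_mul_smul, one_mul, mul_one]
    rw [← sq]
    exact add_mem (add_mem (Submodule.smul_mem _ _ h1) (Submodule.smul_mem _ _ hx1))
      (add_mem (Submodule.smul_mem _ _ hx1) (Submodule.smul_mem _ _ hx))
  exact Algebra.adjoin_le (S := (Submodule.span R {1, x}).toSubalgebra h1 hmul)
    (Set.singleton_subset_iff.mpr hx1)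

namespace MvPolynomial

open Finsupp

variable {σ R : Type*}

section CommSemiring

variable [CommSemiring R]

theorem mem_pow_idealOfVars_two_iff {p : MvPolynomial σ R} :
    p ∈ idealOfVars σ R ^ 2 ↔ coeff 0 p = 0 ∧ ∀ i, coeff (single i 1) p = 0 := by
  rw [mem_pow_idealOfVars_iff']
  refine ⟨fun h => ⟨h 0 (by simp), fun i => h _ (by simp)⟩, fun ⟨h0, h1⟩ x hx => ?_⟩
  obtain rfl | ⟨i, rfl⟩ := eq_zero_or_eq_single_one_of_degree_lt_two hx
  exacts [h0, h1 i]

theorem coeff_single_two_sq {p : MvPolynomial σ R} (h0 : coeff 0 p = 0) (i : σ) :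
    coeff (single i 2) (p ^ 2) = coeff (single i 1) p ^ 2 := by
  classical
  rw [sq, coeff_mul, Finsupp.antidiagonal_single, Finset.sum_map,
    show Finset.HasAntidiagonal.antidiagonal (2 : ℕ) = {(0, 2), (1, 1), (2, 0)} by decide,
    Finset.sum_insert (by decide), Finset.sum_pair (by decide)]
  simp [h0, sq]

theorem span_monomial_le_pow_idealOfVars {S : Set (σ →₀ ℕ)} {n : ℕ}
    (hS : ∀ s ∈ S, n ≤ s.degree) :
    Ideal.span ((fun s => monomial s (1 : R)) '' S) ≤ idealOfVars σ R ^ n := by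
  rw [Ideal.span_le]
  rintro _ ⟨s, hs, rfl⟩
  nontriviality R
  exact (monomial_mem_pow_idealOfVars_iff n s one_ne_zero).mpr (hS s hs)

theorem coeff_eq_zero_of_mem_span_monomial {S : Set (σ →₀ ℕ)} {q : MvPolynomial σ R}
    (hq : q ∈ Ideal.span ((fun s => monomial s (1 : R)) '' S)) {d : σ →₀ ℕ}
    (hd : ∀ s ∈ S, ¬ s ≤ d) : coeff d q = 0 := by
  by_contra h
  obtain ⟨s, hs, hsd⟩ := mem_ideal_span_monomial_image.mp hq d (mem_support_iff.mpr h)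
  exact hd s hs hsd

theorem map_idealOfVars {S : Type*} [Semiring S] (f : MvPolynomial σ R →+* S) :
    (idealOfVars σ R).map f = Ideal.span (Set.range fun i => f (X i)) := by
  rw [Ideal.map_span, ← Set.range_comp]
  rfl

end CommSemiring

section CommRing

variable [CommRing R]

theorem range_quotient_algHom_eq_adjoin {I : Ideal (MvPolynomial σ R)} {S : Type*} [CommSemiring S]
    [Algebra R S] (f : MvPolynomial σ R ⧸ I →ₐ[R] S) :
    f.range = Algebra.adjoin R (Set.range fun i => f (Ideal.Quotient.mk I (X i))) := by
  have hf : f.comp (Ideal.Quotient.mkₐ R I) = aeval fun i => f (Ideal.Quotient.mk I (X i)) :=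
    algHom_ext fun i => by simp
  rw [← aeval_range, ← hf, AlgHom.range_comp,
    (AlgHom.range_eq_top _).mpr (Ideal.Quotient.mkₐ_surjective R I), Algebra.map_top]

theorem sub_C_coeff_zero_mem_idealOfVars (p : MvPolynomial σ R) :
    p - C (coeff 0 p) ∈ idealOfVars σ R := by
  rw [← pow_one (idealOfVars σ R), mem_pow_idealOfVars_iff']
  intro x hx
  rw [Nat.lt_one_iff, degree_eq_zero_iff] at hx
  simp [hx]

theorem exists_sq_sub_algebraMap_eq_zero (x : MvPolynomial σ R ⧸ idealOfVars σ R ^ 2) :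
    ∃ c : R, (x - algebraMap R _ c) ^ 2 = 0 := by
  obtain ⟨p, rfl⟩ := Ideal.Quotient.mk_surjective x
  refine ⟨coeff 0 p, ?_⟩
  rw [IsScalarTower.algebraMap_apply R (MvPolynomial σ R), Ideal.Quotient.algebraMap_eq,
    algebraMap_eq, ← map_sub, ← map_pow, Ideal.Quotient.eq_zero_iff_mem]
  exact Ideal.pow_mem_pow (sub_C_coeff_zero_mem_idealOfVars p) 2

variable [NoZeroDivisors R] {J : Ideal (MvPolynomial σ R)}

theorem mem_pow_idealOfVars_two_of_sq_mem (hJ : J ≤ idealOfVars σ R ^ 2)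
    (hJ₂ : ∀ q ∈ J, ∀ i, coeff (single i 2) q = 0) {p : MvPolynomial σ R}
    (hp : p ^ 2 ∈ J) :
    p ∈ idealOfVars σ R ^ 2 := by
  have h0 : coeff 0 p = 0 := by
    have := (mem_pow_idealOfVars_two_iff.mp (hJ hp)).1
    rwa [← constantCoeff_eq, map_pow, pow_eq_zero_iff two_ne_zero] at this
  refine mem_pow_idealOfVars_two_iff.mpr ⟨h0, fun i => ?_⟩
  have := hJ₂ _ hp i
  rwa [coeff_single_two_sq h0, pow_eq_zero_iff two_ne_zero] at this

theorem mem_map_pow_idealOfVars_two_of_sq_eq_zero (hJ : J ≤ idealOfVars σ R ^ 2)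
    (hJ₂ : ∀ q ∈ J, ∀ i, coeff (single i 2) q = 0) {y : MvPolynomial σ R ⧸ J}
    (hy : y ^ 2 = 0) :
    y ∈ (idealOfVars σ R ^ 2).map (Ideal.Quotient.mk J) := by
  obtain ⟨p, rfl⟩ := Ideal.Quotient.mk_surjective y
  refine Ideal.mem_map_of_mem _ (mem_pow_idealOfVars_two_of_sq_mem hJ hJ₂ ?_)
  rwa [← Ideal.Quotient.eq_zero_iff_mem, map_pow]

end CommRing

end MvPolynomial

section TwoVariables

section CommSemiring

variable {R : Type*} [CommSemiring R]

theorem span_z5_zw_w3_eq :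
    (Ideal.span {X 0 ^ 5, X 0 * X 1, X 1 ^ 3} : Ideal (MvPolynomial (Fin 2) R)) =
      Ideal.span ((fun s => monomial s (1 : R)) ''
        {Finsupp.single 0 5, Finsupp.single 0 1 + Finsupp.single 1 1, Finsupp.single 1 3}) := by
  simp only [Set.image_insert_eq, Set.image_singleton, monomial_single_add, ← X_pow_eq_monomial,
    pow_one]

theorem span_z5_zw_w3_le :
    (Ideal.span {X 0 ^ 5, X 0 * X 1, X 1 ^ 3} : Ideal (MvPolynomial (Fin 2) R)) ≤
      idealOfVars (Fin 2) R ^ 2 := by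
  rw [span_z5_zw_w3_eq]
  exact span_monomial_le_pow_idealOfVars (by simp)

theorem coeff_single_two_eq_zero_of_mem_span_z5_zw_w3
    {q : MvPolynomial (Fin 2) R} (hq : q ∈ Ideal.span {X 0 ^ 5, X 0 * X 1, X 1 ^ 3}) (i : Fin 2) :
    coeff (Finsupp.single i 2) q = 0 := by
  rw [span_z5_zw_w3_eq] at hq
  refine coeff_eq_zero_of_mem_span_monomial hq ?_
  fin_cases i <;> simp [Finsupp.le_def, Fin.forall_fin_two]

theorem map_idealOfVars_fin_two {S : Type*} [Semiring S] (f : MvPolynomial (Fin 2) R →+* S) :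
    (idealOfVars (Fin 2) R).map f = Ideal.span {f (X 0), f (X 1)} := by
  rw [map_idealOfVars]
  congr 1
  ext
  simp [Fin.exists_fin_two, eq_comm]

end CommSemiring

variable {K : Type*} [Field K]

theorem linearIndependent_one_mk_X :
    LinearIndependent K ![1, Ideal.Quotient.mk (idealOfVars (Fin 2) K ^ 2) (X 0),
      Ideal.Quotient.mk (idealOfVars (Fin 2) K ^ 2) (X 1)] := by
  rw [Fintype.linearIndependent_iff]
  intro g hg
  have hmem : g 0 • 1 + g 1 • X 0 + g 2 • X 1 ∈ idealOfVars (Fin 2) K ^ 2 := by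
    rw [← Ideal.Quotient.eq_zero_iff_mem, ← hg, Fin.sum_univ_three,
      ← Ideal.Quotient.mkₐ_eq_mk K]
    simp only [map_add, map_smul, map_one]
    rfl
  obtain ⟨h0, h1⟩ := mem_pow_idealOfVars_two_iff.mp hmem
  replace h0 : g 0 = 0 := by simpa [coeff_X] using h0
  intro i
  fin_cases i
  · exact h0
  · simpa [coeff_X, h0, Finsupp.single_left_inj] using h1 0
  · simpa [coeff_X, h0, Finsupp.single_left_inj] using h1 1

theorem adjoin_singleton_ne_top (x : MvPolynomial (Fin 2) K ⧸ idealOfVars (Fin 2) K ^ 2) :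
    Algebra.adjoin K {x} ≠ ⊤ := by
  classical
  intro h
  obtain ⟨c, hc⟩ := exists_sq_sub_algebraMap_eq_zero x
  have hx2 : x ^ 2 ∈ Submodule.span K {1, x} := by
    have : x ^ 2 = (2 * c) • x - c ^ 2 • 1 := by
      rw [Algebra.smul_def, Algebra.smul_def]
      linear_combination (norm := (simp only [map_mul, map_pow, map_ofNat, mul_one]; ring)) hc
    rw [this]
    exact sub_mem (Submodule.smul_mem _ _ (Submodule.subset_span (by simp)))
      (Submodule.smul_mem _ _ (Submodule.subset_span (by simp)))
  have hspan : Submodule.span K {1, x} = ⊤ := by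
    refine top_unique ?_
    simpa [h] using Algebra.adjoin_singleton_le_span_of_sq_mem hx2
  have h3 : 3 ≤ ({1, x} : Finset _).card := by
    simpa using linearIndependent_le_span_finset _ linearIndependent_one_mk_X {1, x}
      (by simpa using hspan)
  exact absurd (h3.trans Finset.card_le_two) (by norm_num)

theorem not_surjective_of_map_X_one_mem {I J : Ideal (MvPolynomial (Fin 2) K)}
    (hJ : J ≤ idealOfVars (Fin 2) K ^ 2)
    (φ : (MvPolynomial (Fin 2) K ⧸ I) →ₐ[K] (MvPolynomial (Fin 2) K ⧸ J))
    (hφ : φ (Ideal.Quotient.mk I (X 1)) ∈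
      (idealOfVars (Fin 2) K ^ 2).map (Ideal.Quotient.mk J)) :
    ¬ Function.Surjective φ := by
  intro hsurj
  let ψ := (Ideal.Quotient.factorₐ K hJ).comp φ
  have hψ : Function.Surjective ψ := (Ideal.Quotient.factor_surjective hJ).comp hsurj
  have hψ₁ : ψ (Ideal.Quotient.mk I (X 1)) = 0 := by
    have := Ideal.mem_map_of_mem (Ideal.Quotient.factor hJ) hφ
    rwa [Ideal.map_map, Ideal.Quotient.factor_comp_mk, Ideal.map_quotient_self,
      Ideal.mem_bot] at this
  refine adjoin_singleton_ne_top (ψ (Ideal.Quotient.mk I (X 0))) (top_unique ?_)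
  rw [← (AlgHom.range_eq_top ψ).mpr hψ, range_quotient_algHom_eq_adjoin]
  refine Algebra.adjoin_le ?_
  rintro _ ⟨i, rfl⟩
  fin_cases i
  · exact Algebra.subset_adjoin rfl
  · change ψ (Ideal.Quotient.mk I (X 1)) ∈ _
    rw [hψ₁]
    exact zero_mem _

end TwoVariables

theorem stmt_16_general (K : Type*) [Field K]
    (I : Ideal (MvPolynomial (Fin 2) K))
    (hI : I = Ideal.span {X 0 ^ 5, X 0 ^ 4 - X 0 ^ 2 * X 1, X 1 ^ 2})
    (J : Ideal (MvPolynomial (Fin 2) K))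
    (hJ : J = Ideal.span {X 0 ^ 5, X 0 * X 1, X 1 ^ 3}) :
    (∀ φ : (MvPolynomial (Fin 2) K ⧸ I) →ₐ[K] (MvPolynomial (Fin 2) K ⧸ J),
      φ (Ideal.Quotient.mk I (X 1)) ∈
        (Ideal.span {Ideal.Quotient.mk J (X 0), Ideal.Quotient.mk J (X 1)}) ^ 2) ∧
    (∀ φ : (MvPolynomial (Fin 2) K ⧸ I) →ₐ[K] (MvPolynomial (Fin 2) K ⧸ J),
      ¬ Function.Surjective φ) ∧
    IsEmpty ((MvPolynomial (Fin 2) K ⧸ I) ≃ₐ[K] (MvPolynomial (Fin 2) K ⧸ J)) := by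
  have hJle : J ≤ idealOfVars (Fin 2) K ^ 2 := hJ ▸ span_z5_zw_w3_le
  have hJcoeff : ∀ q ∈ J, ∀ i, coeff (Finsupp.single i 2) q = 0 :=
    hJ ▸ fun _ hq => coeff_single_two_eq_zero_of_mem_span_z5_zw_w3 hq
  have hs : ∀ φ : (MvPolynomial (Fin 2) K ⧸ I) →ₐ[K] (MvPolynomial (Fin 2) K ⧸ J),
      φ (Ideal.Quotient.mk I (X 1)) ∈ (idealOfVars (Fin 2) K ^ 2).map (Ideal.Quotient.mk J) := by
    refine fun φ => mem_map_pow_idealOfVars_two_of_sq_eq_zero hJle hJcoeff ?_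
    rw [← map_pow, ← map_pow,
      Ideal.Quotient.eq_zero_iff_mem.mpr (hI ▸ Ideal.subset_span (by simp)), map_zero]
  have hns : ∀ φ : (MvPolynomial (Fin 2) K ⧸ I) →ₐ[K] (MvPolynomial (Fin 2) K ⧸ J),
      ¬ Function.Surjective φ := fun φ => not_surjective_of_map_X_one_mem hJle φ (hs φ)
  refine ⟨fun φ => ?_, hns, ⟨fun e => hns e.toAlgHom e.surjective⟩⟩
  rw [← map_idealOfVars_fin_two, ← Ideal.map_pow]
  exact hs φ

/-- `K[t,s]/(t⁵, t⁴ − t²s, s²)` is not isomorphic to `K[z,w]/(z⁵, zw, w³)`: every algebra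
homomorphism sends `s` into the square of the maximal ideal (forcing `c = d = 0`), hence no
homomorphism is surjective and there is no isomorphism. -/
theorem stmt_16 (K : Type*) [Field K] [CharZero K]
    (I : Ideal (MvPolynomial (Fin 2) K))
    (hI : I = Ideal.span {X 0 ^ 5, X 0 ^ 4 - X 0 ^ 2 * X 1, X 1 ^ 2})
    (J : Ideal (MvPolynomial (Fin 2) K))
    (hJ : J = Ideal.span {X 0 ^ 5, X 0 * X 1, X 1 ^ 3}) :
    (∀ φ : (MvPolynomial (Fin 2) K ⧸ I) →ₐ[K] (MvPolynomial (Fin 2) K ⧸ J),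
      φ (Ideal.Quotient.mk I (X 1)) ∈
        (Ideal.span {Ideal.Quotient.mk J (X 0), Ideal.Quotient.mk J (X 1)}) ^ 2) ∧
    (∀ φ : (MvPolynomial (Fin 2) K ⧸ I) →ₐ[K] (MvPolynomial (Fin 2) K ⧸ J),
      ¬ Function.Surjective φ) ∧
    IsEmpty ((MvPolynomial (Fin 2) K ⧸ I) ≃ₐ[K] (MvPolynomial (Fin 2) K ⧸ J)) :=
  stmt_16_general K I hI J hJ
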